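/- If f and c are continuous, λ_k → ∞, u_{λ_k} minimizes f_{λ_k}, and u_{λ_k} → u*, then u* is feasible (c(u*) ≤ 0) and u* minimizes f over the feasible set, provided the feasible set is nonempty. -/
import Mathlib


/-- If `f` and `c` are continuous, `λ_k → ∞`, `u_k` is a global minimizer of `f_{λ_k}`
for each `k`, and `u_k → u*`, then (provided the feasible set is nonempty) `u*` is
feasible and minimizes `f` over the feasible set. -/
theorem penalty_limit_is_constrained_minimizer {n : ℕ}
    (f c : (Fin n → ℝ) → ℝ) (hf : Continuous f) (hc : Continuous c)
    (lam : ℕ → ℝ) (hlam : Filter.Tendsto lam Filter.atTop Filter.atTop)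
    (u : ℕ → (Fin n → ℝ))
    (hmin : ∀ k, ∀ v, f (u k) + lam k / 2 * (max 0 (c (u k))) ^ 2
                        ≤ f v + lam k / 2 * (max 0 (c v)) ^ 2)
    (ustar : Fin n → ℝ)
    (hconv : Filter.Tendsto u Filter.atTop (nhds ustar))
    (hne : ∃ v, c v ≤ 0) :
    c ustar ≤ 0 ∧ ∀ v, c v ≤ 0 → f ustar ≤ f v := by
  obtain ⟨v₀, hv₀⟩ := hne
  have hfu : Filter.Tendsto (fun k => f (u k)) Filter.atTop (nhds (f ustar)) :=
    (hf.tendsto ustar).comp hconv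
  have hcu : Filter.Tendsto (fun k => c (u k)) Filter.atTop (nhds (c ustar)) :=
    (hc.tendsto ustar).comp hconv
  -- key bound from minimizer property at feasible v₀
  have hbound : ∀ k, f (u k) + lam k / 2 * (max 0 (c (u k))) ^ 2 ≤ f v₀ := by
    intro k
    have := hmin k v₀
    have h0 : max 0 (c v₀) = 0 := max_eq_left hv₀
    simpa [h0] using this
  have hfeas : c ustar ≤ 0 := by
    by_contra h
    push_neg at h
    set ε := c ustar with hε
    -- eventually c (u k) > ε/2
    have h1 : ∀ᶠ k in Filter.atTop, ε / 2 < c (u k) :=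
      hcu.eventually (eventually_gt_nhds (by linarith))
    -- eventually f (u k) > f ustar - 1
    have h2 : ∀ᶠ k in Filter.atTop, f ustar - 1 < f (u k) :=
      hfu.eventually (eventually_gt_nhds (by linarith))
    -- eventually lam k large
    have h3 : ∀ᶠ k in Filter.atTop,
        (f v₀ - f ustar + 1) / ((ε / 2) ^ 2 / 2) < lam k :=
      hlam.eventually_gt_atTop _
    have h4 : ∀ᶠ k in Filter.atTop, (0:ℝ) ≤ lam k := hlam.eventually_ge_atTop 0
    obtain ⟨k, hk1, hk2, hk3, hk4⟩ := (h1.and (h2.and (h3.and h4))).exists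
    have hεpos : (0:ℝ) < ε / 2 := by linarith
    have hsq : (ε / 2) ^ 2 ≤ (max 0 (c (u k))) ^ 2 := by
      have : ε / 2 ≤ max 0 (c (u k)) := le_max_of_le_right hk1.le
      exact pow_le_pow_left₀ hεpos.le this 2
    have hdiv : (f v₀ - f ustar + 1) < lam k * ((ε / 2) ^ 2 / 2) :=
      (div_lt_iff₀ (by positivity)).mp hk3
    have hmul : lam k / 2 * (ε / 2) ^ 2 ≤ lam k / 2 * (max 0 (c (u k))) ^ 2 :=
      mul_le_mul_of_nonneg_left hsq (by linarith)
    have hb := hbound k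
    nlinarith
  refine ⟨hfeas, fun v hv => ?_⟩
  have hle : ∀ᶠ k in Filter.atTop, f (u k) ≤ f v := by
    filter_upwards [hlam.eventually_ge_atTop 0] with k hk
    have := hmin k v
    have h0 : max 0 (c v) = 0 := max_eq_left hv
    rw [h0] at this
    nlinarith [sq_nonneg (max 0 (c (u k)))]
  exact le_of_tendsto hfu hle
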